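/- Let W : ℝ^N → [0,∞] be lower semicontinuous satisfying (H1) and (H2). Then every σ ∈ H^1_loc(ℝ, ℝ^N) with finite energy ∫_ℝ (|σ'(t)|² + W(σ(t))) dt < ∞ has limits at ±∞, i.e., there exist u⁻, u⁺ ∈ ℝ^N with W(u⁻) = W(u⁺) = 0 such that σ(t) → u^± as t → ±∞. -/

import Mathlib

/-!
The square-integrable derivative makes `σ` ½-Hölder by Cauchy–Schwarz, hence uniformly
continuous. Away from its wells `W` is bounded below by a positive constant (lower
semicontinuity on a compact set, and (H2) outside it), so finite energy forces the set of times
at which `σ` is `ε`-far from the wells to have finite measure; by uniform continuity `σ` cannot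
leave the `ε`-neighbourhood of the wells on arbitrarily late intervals of fixed length, so it is
eventually `ε`-close to them. The wells are finitely many, hence separated, and connectedness of
`[T, ∞)` pins `σ` near a single well, which is its limit. Reflecting time gives the limit at `-∞`.
-/

open MeasureTheory Metric Set Filter Topology
open scoped ENNReal NNReal

theorem setLIntegral_le_sqrt_lintegral_sq_mul_sqrt_measure {α : Type*} [MeasurableSpace α]
    {μ : Measure α} {f : α → ℝ≥0∞} (hf : AEMeasurable f μ) (A : Set α) :
    ∫⁻ x in A, f x ∂μ ≤ (∫⁻ x, f x ^ 2 ∂μ) ^ (1 / 2 : ℝ) * μ A ^ (1 / 2 : ℝ) := by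
  have hCS := ENNReal.lintegral_mul_le_Lp_mul_Lq (μ.restrict A)
    Real.HolderConjugate.two_two hf.restrict (aemeasurable_const (b := (1 : ℝ≥0∞)))
  simp only [Pi.mul_apply, mul_one, one_pow, one_mul, setLIntegral_const,
    ENNReal.rpow_two] at hCS
  refine hCS.trans ?_
  gcongr
  exact Measure.restrict_le_self

theorem holderWith_of_sub_eq_intervalIntegral {E : Type*} [NormedAddCommGroup E]
    [NormedSpace ℝ E] {σ g : ℝ → E} (hg : AEMeasurable (fun r => ‖g r‖ₑ))
    (hFTC : ∀ s t, σ t - σ s = ∫ r in s..t, g r) (hg2 : ∫⁻ r, ‖g r‖ₑ ^ 2 ≠ ∞) :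
    HolderWith (∫⁻ r, ‖g r‖ₑ ^ 2).toNNReal.sqrt (1 / 2) σ := by
  have hle : ∀ s t, s ≤ t → edist (σ t) (σ s) ≤
      (∫⁻ r, ‖g r‖ₑ ^ 2).toNNReal.sqrt * edist t s ^ ((1 / 2 : ℝ≥0) : ℝ) := by
    intro s t hst
    rw [edist_eq_enorm_sub, hFTC, intervalIntegral.integral_of_le hst, edist_dist,
      Real.dist_eq, abs_of_nonneg (sub_nonneg.2 hst), NNReal.sqrt_eq_rpow,
      ENNReal.coe_rpow_of_nonneg _ (by norm_num), ENNReal.coe_toNNReal hg2]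
    refine (enorm_integral_le_lintegral_enorm _).trans ?_
    simpa using setLIntegral_le_sqrt_lintegral_sq_mul_sqrt_measure hg (Ioc s t)
  intro x y
  rcases le_total y x with h | h
  · exact hle y x h
  · rw [edist_comm, edist_comm x]
    exact hle x y h

theorem exists_pos_le_of_forall_le_dist {E : Type*} [NormedAddCommGroup E] [ProperSpace E]
    {W : E → ℝ≥0∞} (hW : LowerSemicontinuous W)
    (hcoercive : ∃ c : ℝ≥0∞, 0 < c ∧ ∃ R : ℝ, ∀ z : E, R ≤ ‖z‖ → c ≤ W z) {ε : ℝ} (hε : 0 < ε) :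
    ∃ δ > 0, ∀ z, (∀ w, W w = 0 → ε ≤ dist z w) → δ ≤ W z := by
  obtain ⟨c, hc, R, hR⟩ := hcoercive
  set S := closedBall (0 : E) R ∩ {z | ∀ w, W w = 0 → ε ≤ dist z w}
  have hS : IsCompact S := (isCompact_closedBall _ _).inter_right <| by
    simp only [ofPred_forall]
    exact isClosed_iInter fun w => isClosed_iInter fun _ =>
      isClosed_le continuous_const (continuous_id.dist continuous_const)
  have hpos : ∀ z ∈ S, 0 < W z := fun z hz => pos_iff_ne_zero.2 fun h0 =>
    hε.not_ge (by simpa using hz.2 z h0)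
  have hfar : ∀ z, (∀ w, W w = 0 → ε ≤ dist z w) → R < ‖z‖ ∨ z ∈ S := fun z hz =>
    (lt_or_ge R ‖z‖).imp_right fun h => ⟨mem_closedBall_zero_iff.2 h, hz⟩
  rcases S.eq_empty_or_nonempty with hS0 | hSne
  · refine ⟨c, hc, fun z hz => ?_⟩
    rcases hfar z hz with h | h
    · exact hR z h.le
    · exact absurd h (hS0 ▸ notMem_empty z)
  · obtain ⟨z₀, hz₀, hmin⟩ := (hW.lowerSemicontinuousOn S).exists_isMinOn hSne hS
    refine ⟨min c (W z₀), lt_min hc (hpos z₀ hz₀), fun z hz => ?_⟩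
    rcases hfar z hz with h | h
    · exact (min_le_left _ _).trans (hR z h.le)
    · exact (min_le_right _ _).trans (hmin h)

theorem measure_setOf_le_dist_lt_top {α E : Type*} [MeasurableSpace α] {μ : Measure α}
    [NormedAddCommGroup E] [ProperSpace E] [MeasurableSpace E] [OpensMeasurableSpace E]
    {W : E → ℝ≥0∞} (hW : LowerSemicontinuous W)
    (hcoercive : ∃ c : ℝ≥0∞, 0 < c ∧ ∃ R : ℝ, ∀ z : E, R ≤ ‖z‖ → c ≤ W z)
    {f : α → E} (hf : Measurable f) (hWf : ∫⁻ x, W (f x) ∂μ < ∞) {ε : ℝ} (hε : 0 < ε) :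
    μ {x | ∀ w, W w = 0 → ε ≤ dist (f x) w} < ∞ := by
  obtain ⟨δ, hδ, hδW⟩ := exists_pos_le_of_forall_le_dist hW hcoercive hε
  have hMarkov : δ * μ {x | δ ≤ W (f x)} ≤ ∫⁻ x, W (f x) ∂μ :=
    mul_meas_ge_le_lintegral (hW.measurable.comp hf) δ
  exact (measure_mono fun x hx => hδW _ hx).trans_lt
    (ENNReal.lt_top_of_mul_ne_top_right (hMarkov.trans_lt hWf).ne hδ.ne')

theorem eventually_not_Icc_subset_of_volume_ne_top {U : Set ℝ} (hU : MeasurableSet U)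
    (hfin : volume U ≠ ∞) {η : ℝ} (hη : 0 < η) : ∀ᶠ t in atTop, ¬ Icc t (t + η) ⊆ U := by
  have htail : Tendsto (fun t => volume (U ∩ Ici t)) atTop (𝓝 0) := by
    have := tendsto_measure_iInter_atTop (μ := volume) (s := fun t : ℝ => U ∩ Ici t)
      (fun t => (hU.inter measurableSet_Ici).nullMeasurableSet)
      (fun a b hab => inter_subset_inter_right _ (Ici_subset_Ici.2 hab))
      ⟨0, ne_top_of_le_ne_top hfin (measure_mono inter_subset_left)⟩
    rwa [← inter_iInter, iInter_eq_empty_iff.2 fun x => ⟨x + 1, by simp⟩, inter_empty,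
      measure_empty] at this
  filter_upwards [htail.eventually_lt_const (ENNReal.ofReal_pos.2 hη)] with t ht hsub
  have : volume (Icc t (t + η)) ≤ volume (U ∩ Ici t) :=
    measure_mono fun x hx => ⟨hsub hx, hx.1⟩
  rw [Real.volume_Icc, add_sub_cancel_left] at this
  exact this.not_gt ht

theorem Set.Finite.exists_pos_le_dist {α : Type*} [MetricSpace α] {Z : Set α} (hZ : Z.Finite) :
    ∃ r > 0, ∀ w ∈ Z, ∀ w' ∈ Z, w ≠ w' → r ≤ dist w w' := by
  have hsmall : ∀ᶠ r in 𝓝[>] (0 : ℝ), ∀ p ∈ Z.offDiag, r ≤ dist p.1 p.2 :=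
    (eventually_all_finite hZ.offDiag).2 fun p hp =>
      eventually_nhdsWithin_of_eventually_nhds (eventually_le_nhds (dist_pos.2 hp.2.2))
  obtain ⟨r, hr, hr0⟩ := (hsmall.and self_mem_nhdsWithin).exists
  exact ⟨r, hr0, fun w hw w' hw' hne => hr (w, w') ⟨hw, hw', hne⟩⟩

section WellsAtInfinity

variable {α : Type*} [MetricSpace α] {Z : Set α} {f : ℝ → α}

theorem eventually_exists_dist_lt_of_volume_lt_top (hf : UniformContinuous f)
    (hfar : ∀ ε > 0, volume {t | ∀ w ∈ Z, ε ≤ dist (f t) w} < ∞) {ε : ℝ} (hε : 0 < ε) :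
    ∀ᶠ t in atTop, ∃ w ∈ Z, dist (f t) w < ε := by
  obtain ⟨η, hη, hfη⟩ := Metric.uniformContinuous_iff.1 hf (ε / 2) (half_pos hε)
  have hclosed : IsClosed {t | ∀ w ∈ Z, ε / 2 ≤ dist (f t) w} := by
    simp only [ofPred_forall]
    exact isClosed_biInter fun w _ =>
      isClosed_le continuous_const (hf.continuous.dist continuous_const)
  filter_upwards [eventually_not_Icc_subset_of_volume_ne_top hclosed.measurableSet
    (hfar _ (half_pos hε)).ne (half_pos hη)] with t ht
  by_contra! hfar_t
  refine ht fun x hx w hw => ?_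
  have hxt : dist (f x) (f t) < ε / 2 := hfη <| by
    rw [Real.dist_eq, abs_of_nonneg (sub_nonneg.2 hx.1)]
    linarith [hx.2]
  linarith [hfar_t w hw, dist_triangle_left (f t) w (f x)]

theorem exists_eventually_dist_lt_of_eventually_exists (hf : Continuous f) {r ε : ℝ}
    (hsep : ∀ w ∈ Z, ∀ w' ∈ Z, w ≠ w' → r ≤ dist w w') (hεr : 2 * ε ≤ r)
    (hnear : ∀ᶠ t in atTop, ∃ w ∈ Z, dist (f t) w < ε) :
    ∃ w ∈ Z, ∀ᶠ t in atTop, dist (f t) w < ε := by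
  obtain ⟨T, hT⟩ := eventually_atTop.1 hnear
  obtain ⟨w₀, hw₀, hTw₀⟩ := hT T le_rfl
  refine ⟨w₀, hw₀, eventually_atTop.2 ⟨T, fun t ht => ?_⟩⟩
  have hsplit : Ici T ⊆ {t | dist (f t) w₀ < ε} ∪ {t | ε < dist (f t) w₀} := by
    intro x hx
    obtain ⟨w, hw, hxw⟩ := hT x hx
    rcases eq_or_ne w w₀ with rfl | hne
    · exact Or.inl hxw
    · exact Or.inr (show ε < dist (f x) w₀ by
        linarith [hsep w hw w₀ hw₀ hne, dist_triangle_left w w₀ (f x)])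
  exact isPreconnected_Ici.subset_left_of_subset_union
    (isOpen_lt (hf.dist continuous_const) continuous_const)
    (isOpen_lt continuous_const (hf.dist continuous_const))
    (disjoint_left.2 fun x (h₁ : dist (f x) w₀ < ε) h₂ => h₁.not_gt h₂)
    hsplit ⟨T, self_mem_Ici, hTw₀⟩ ht

theorem exists_tendsto_of_eventually_exists_dist_lt (hZ : Z.Finite) (hf : Continuous f)
    (hnear : ∀ ε > 0, ∀ᶠ t in atTop, ∃ w ∈ Z, dist (f t) w < ε) :
    ∃ u ∈ Z, Tendsto f atTop (𝓝 u) := by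
  obtain ⟨r, hr, hsep⟩ := hZ.exists_pos_le_dist
  have hpin : ∀ ε > 0, 2 * ε ≤ r → ∃ w ∈ Z, ∀ᶠ t in atTop, dist (f t) w < ε :=
    fun ε hε hεr => exists_eventually_dist_lt_of_eventually_exists hf hsep hεr (hnear ε hε)
  obtain ⟨u, hu, hfu⟩ := hpin (r / 2) (half_pos hr) (by linarith)
  refine ⟨u, hu, Metric.tendsto_nhds.2 fun ε hε => ?_⟩
  obtain ⟨w, hw, hfw⟩ := hpin (min ε (r / 2)) (lt_min hε (half_pos hr))
    (by linarith [min_le_right ε (r / 2)])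
  obtain rfl : w = u := by
    by_contra hne
    obtain ⟨t, htu, htw⟩ := (hfu.and hfw).exists
    linarith [hsep w hw u hu hne, dist_triangle_left w u (f t), min_le_right ε (r / 2)]
  exact hfw.mono fun t ht => ht.trans_le (min_le_left _ _)

theorem exists_tendsto_atTop_of_volume_lt_top (hZ : Z.Finite) (hf : UniformContinuous f)
    (hfar : ∀ ε > 0, volume {t | ∀ w ∈ Z, ε ≤ dist (f t) w} < ∞) :
    ∃ u ∈ Z, Tendsto f atTop (𝓝 u) :=
  exists_tendsto_of_eventually_exists_dist_lt hZ hf.continuous fun _ hε =>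
    eventually_exists_dist_lt_of_volume_lt_top hf hfar hε

end WellsAtInfinity

theorem finite_energy_limits_general {N : ℕ} (W : EuclideanSpace ℝ (Fin N) → ℝ≥0∞)
    (hlsc : LowerSemicontinuous W)
    (hH1 : {z : EuclideanSpace ℝ (Fin N) | W z = 0}.Finite)
    (hH2 : ∃ c : ℝ≥0∞, 0 < c ∧ ∃ R : ℝ, ∀ z : EuclideanSpace ℝ (Fin N), R ≤ ‖z‖ → c ≤ W z)
    (σ g : ℝ → EuclideanSpace ℝ (Fin N)) (hg : Measurable g)
    (hFTC : ∀ s t : ℝ, σ t - σ s = ∫ r in s..t, g r)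
    (hE : (∫⁻ t : ℝ, ((‖g t‖₊ : ℝ≥0∞) ^ 2 + W (σ t))) < ⊤) :
    ∃ um up : EuclideanSpace ℝ (Fin N), W um = 0 ∧ W up = 0 ∧
      Tendsto σ atBot (nhds um) ∧ Tendsto σ atTop (nhds up) := by
  have hg2 : ∫⁻ t, ‖g t‖ₑ ^ 2 < ∞ := (lintegral_mono fun t => le_self_add).trans_lt hE
  have hWσ : ∫⁻ t, W (σ t) < ∞ := (lintegral_mono fun t => le_add_self).trans_lt hE
  have hσ : UniformContinuous σ :=
    (holderWith_of_sub_eq_intervalIntegral hg.enorm.aemeasurable hFTC hg2.ne).uniformContinuous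
      (by norm_num)
  have hfar : ∀ ε > 0, volume {t | ∀ w ∈ {z | W z = 0}, ε ≤ dist (σ t) w} < ∞ :=
    fun _ hε => measure_setOf_le_dist_lt_top hlsc hH2 hσ.continuous.measurable hWσ hε
  obtain ⟨up, hup0, hup⟩ := exists_tendsto_atTop_of_volume_lt_top hH1 hσ hfar
  obtain ⟨um, hum0, hum⟩ := exists_tendsto_atTop_of_volume_lt_top hH1
    (hσ.comp uniformContinuous_neg) fun ε hε => (Measure.measure_neg _ _).trans_lt (hfar ε hε)
  refine ⟨um, up, hum0, hup0, ?_, hup⟩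
  simpa [Function.comp_def] using hum.comp tendsto_neg_atBot_atTop

/-- For lower semicontinuous `W : ℝ^N → [0,∞]` satisfying (H1) and (H2),
every finite-energy map `σ ∈ H¹_loc(ℝ, ℝ^N)` (given by its continuous representative,
with a.e. derivative `g` in the sense of the fundamental theorem of calculus) with
`∫_ℝ (|σ'|² + W(σ)) < ∞` has limits `u⁻, u⁺` at `∓∞, ±∞` which are wells of `W`. -/
theorem finite_energy_limits {N : ℕ} (W : EuclideanSpace ℝ (Fin N) → ℝ≥0∞)
    (hlsc : LowerSemicontinuous W)
    (hH1 : {z : EuclideanSpace ℝ (Fin N) | W z = 0}.Finite)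
    (hH2 : ∃ c : ℝ≥0∞, 0 < c ∧ ∃ R : ℝ, ∀ z : EuclideanSpace ℝ (Fin N), R ≤ ‖z‖ → c ≤ W z)
    (σ g : ℝ → EuclideanSpace ℝ (Fin N)) (hσ : Continuous σ) (hg : Measurable g)
    (hFTC : ∀ s t : ℝ, σ t - σ s = ∫ r in s..t, g r)
    (hE : (∫⁻ t : ℝ, ((‖g t‖₊ : ℝ≥0∞) ^ 2 + W (σ t))) < ⊤) :
    ∃ um up : EuclideanSpace ℝ (Fin N), W um = 0 ∧ W up = 0 ∧
      Tendsto σ atBot (nhds um) ∧ Tendsto σ atTop (nhds up) :=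
  finite_energy_limits_general W hlsc hH1 hH2 σ g hg hFTC hE
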